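/- arXiv:1112.2960 — 2 statements merged into one kernel-verified Lean document; each statement's English description precedes it below -/
import Mathlib

section
/- Let R be a commutative Artinian ring, A an R-algebra finitely generated as R-module, and M a finitely generated A-module. If M is sincere and is not the middle of a short chain, then M is faithful: Ann_A(M) = 0. -/
open CategoryTheory

variable (A : Type) [Ring A]

/-- An indecomposable module: nontrivial, and the only idempotent endomorphisms are 0 and 1. -/
def Indec (X : ModuleCat A) : Prop :=
  Nontrivial X ∧ ∀ f : X ⟶ X, f ≫ f = f → f = 0 ∨ f = 𝟙 X

/-- Vanishing of the homomorphism space. -/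
def HomZero (X Y : ModuleCat A) : Prop := ∀ f : X ⟶ Y, f = 0

/-- `N` is a direct summand of `M`. -/
def Summand (N M : ModuleCat A) : Prop := ∃ (i : N ⟶ M) (p : M ⟶ N), i ≫ p = 𝟙 N

/-- An almost split (Auslander–Reiten) sequence `0 → X → E → Y → 0`. -/
def IsAlmostSplitSeq {X E Y : ModuleCat A} (f : X ⟶ E) (g : E ⟶ Y) : Prop :=
  Function.Injective f ∧ Function.Surjective g ∧
  LinearMap.range f.hom = LinearMap.ker g.hom ∧
  (¬ ∃ s : Y ⟶ E, s ≫ g = 𝟙 Y) ∧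
  ∀ (Z : ModuleCat A) (h : Z ⟶ Y), (¬ ∃ s : Y ⟶ Z, s ≫ h = 𝟙 Y) → ∃ h' : Z ⟶ E, h' ≫ g = h

/-- `τ` is an Auslander–Reiten translation: for each indecomposable non-projective `X`,
there is an almost split sequence `0 → τ X → E → X → 0`. -/
def IsARTranslation (τ : ModuleCat A → ModuleCat A) : Prop :=
  ∀ X : ModuleCat A, Indec A X → ¬ Projective X →
    ∃ (E : ModuleCat A) (f : τ X ⟶ E) (g : E ⟶ X), IsAlmostSplitSeq A f g

/-- `M` is the middle of a short chain `X → M → τ X`. -/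
def IsMiddleOfShortChain (τ : ModuleCat A → ModuleCat A) (M : ModuleCat A) : Prop :=
  ∃ X : ModuleCat A, Indec A X ∧ (∃ f : X ⟶ M, f ≠ 0) ∧ (∃ g : M ⟶ τ X, g ≠ 0)

/-- `M` is sincere: every simple module occurs as a composition factor of `M`. -/
def Sincere (M : ModuleCat A) : Prop :=
  ∀ (S : Type) [AddCommGroup S] [Module A S], IsSimpleModule A S →
    ∃ (N P : Submodule A M), P ≤ N ∧
      Nonempty ((↥N ⧸ Submodule.comap N.subtype P) ≃ₗ[A] S)

/-!
Suppose `I = Ann_A M ≠ 0`. As `A` is Artinian, hence Noetherian, `I` has a simple quotient; by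
sincerity it embeds into some `M ⧸ P`, giving a nonzero `φ : I → M ⧸ P`.

On the other hand every extension of a submodule `V` of `A ⧸ I` by a quotient of `M` splits, by
induction on the Artinian lattice of submodules of `A ⧸ I`. Decomposable `V` split into smaller
summands and projective `V` are clear. For indecomposable non-projective `V`, the embedding of
`A ⧸ I` into a power of `M` yields a nonzero `V → M`, so `Hom(M, τ V) = 0` because `M` is not the
middle of a short chain, and lifting along the almost split sequence ending in `V` splits the
extension.

Splitting the pushout of `0 → I → A → A ⧸ I → 0` along `φ` extends `φ` to `ψ : A → M ⧸ P`, and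
then `φ i = i • ψ 1 = 0` since `I` annihilates `M`.
-/

universe u

namespace LinearMap

section Pushout

variable {R B Q W : Type*} [Ring R] [AddCommGroup B] [Module R B] [AddCommGroup Q] [Module R Q]
  [AddCommGroup W] [Module R W] (π : B →ₗ[R] Q) (φ : ker π →ₗ[R] W)

abbrev Pushout : Type _ := (W × B) ⧸ range (φ.prod (-(ker π).subtype))

def pushoutInl : W →ₗ[R] Pushout π φ := Submodule.mkQ _ ∘ₗ inl R W B

def pushoutInr : B →ₗ[R] Pushout π φ := Submodule.mkQ _ ∘ₗ inr R W B

def pushoutProj : Pushout π φ →ₗ[R] Q :=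
  (range (φ.prod (-(ker π).subtype))).liftQ (π ∘ₗ snd R W B) <| by
    rintro _ ⟨i, rfl⟩
    simp

theorem pushoutInr_apply_of_mem_ker (i : ker π) : pushoutInr π φ i = pushoutInl π φ (φ i) := by
  refine (Submodule.Quotient.eq _).mpr ⟨-i, ?_⟩
  simp

theorem pushoutInl_injective : Function.Injective (pushoutInl π φ) := by
  intro w w' h
  obtain ⟨i, hi⟩ := (Submodule.Quotient.eq _).mp h
  have hi0 : i = 0 := by simpa using congrArg Prod.snd hi
  simpa [hi0, sub_eq_zero, eq_comm] using congrArg Prod.fst hi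

theorem exact_pushoutInl_pushoutProj : Function.Exact (pushoutInl π φ) (pushoutProj π φ) := by
  intro y
  obtain ⟨⟨w, b⟩, rfl⟩ := Submodule.Quotient.mk_surjective _ y
  constructor
  · intro hb
    refine ⟨w + φ ⟨b, hb⟩, (Submodule.Quotient.eq _).mpr ⟨⟨b, hb⟩, ?_⟩⟩
    simp
  · rintro ⟨w', hw'⟩
    rw [← hw']
    simp [pushoutInl, pushoutProj]

theorem pushoutProj_surjective (hπ : Function.Surjective π) :
    Function.Surjective (pushoutProj π φ) := by
  intro q
  obtain ⟨b, rfl⟩ := hπ q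
  exact ⟨pushoutInr π φ b, by simp [pushoutInr, pushoutProj]⟩

theorem exists_extension_of_pushoutProj_split (hπ : Function.Surjective π)
    (hs : ∃ s, pushoutProj π φ ∘ₗ s = id) : ∃ ψ : B →ₗ[R] W, ψ ∘ₗ (ker π).subtype = φ := by
  obtain ⟨r, hr⟩ := ((exact_pushoutInl_pushoutProj π φ).split_tfae (pushoutInl_injective π φ)
    (pushoutProj_surjective π φ hπ)).out 0 1 |>.mp hs
  refine ⟨r ∘ₗ pushoutInr π φ, LinearMap.ext fun i => ?_⟩
  simp [pushoutInr_apply_of_mem_ker, ← LinearMap.comp_apply r, hr]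

end Pushout

end LinearMap

/-- `Ext¹(V, M') = 0` for every quotient `M'` of `M`, phrased through exact sequences
`M → Y → V → 0`. -/
def ExtensionsSplit (M : ModuleCat.{u} A) (V : Type u) [AddCommGroup V] [Module A V] : Prop :=
  ∀ (Y : Type u) [AddCommGroup Y] [Module A Y] (k : M →ₗ[A] Y) (p : Y →ₗ[A] V),
    Function.Exact k p → Function.Surjective p → ∃ s : V →ₗ[A] Y, p ∘ₗ s = LinearMap.id

section

variable {A}

namespace ExtensionsSplit

variable {M : ModuleCat.{u} A} {V : Type u} [AddCommGroup V] [Module A V]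

theorem of_subsingleton [Subsingleton V] : ExtensionsSplit A M V :=
  fun _ _ _ _ _ _ _ => ⟨0, Subsingleton.elim _ _⟩

theorem of_projective [Module.Projective A V] : ExtensionsSplit A M V :=
  fun _ _ _ _ p _ hp => Module.projective_lifting_property p LinearMap.id hp

theorem exists_section_restrict {N : Type u} [AddCommGroup N] [Module A N] {K : Submodule A N}
    (hK : ExtensionsSplit A M K) {Y : Type u} [AddCommGroup Y] [Module A Y] {k : M →ₗ[A] Y}
    {p : Y →ₗ[A] N} (hkp : Function.Exact k p) (hp : Function.Surjective p) :
    ∃ s : K →ₗ[A] Y, p ∘ₗ s = K.subtype := by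
  let kK : M →ₗ[A] K.comap p := k.codRestrict _ fun m => by simp [hkp.apply_apply_eq_zero]
  let pK : K.comap p →ₗ[A] K := p.restrict fun _ hy => hy
  have hexact : Function.Exact kK pK := by
    intro y
    simp only [Subtype.ext_iff, Set.mem_range, pK, kK, LinearMap.coe_restrict_apply,
      LinearMap.codRestrict_apply, Submodule.coe_zero]
    exact hkp y
  have hsurj : Function.Surjective pK := by
    intro x
    obtain ⟨y, hy⟩ := hp x
    exact ⟨⟨y, by simp [hy]⟩, Subtype.ext hy⟩
  obtain ⟨s, hs⟩ := hK _ kK pK hexact hsurj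
  refine ⟨(K.comap p).subtype ∘ₗ s, LinearMap.ext fun x => ?_⟩
  simpa [pK] using congr(($hs x : N))

theorem of_isCompl {K₁ K₂ : Submodule A V} (hK : IsCompl K₁ K₂) (h₁ : ExtensionsSplit A M K₁)
    (h₂ : ExtensionsSplit A M K₂) : ExtensionsSplit A M V := by
  intro Y _ _ k p hkp hp
  obtain ⟨s₁, hs₁⟩ := h₁.exists_section_restrict hkp hp
  obtain ⟨s₂, hs₂⟩ := h₂.exists_section_restrict hkp hp
  refine ⟨LinearMap.ofIsCompl hK s₁ s₂, ?_⟩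
  calc p ∘ₗ LinearMap.ofIsCompl hK s₁ s₂ = LinearMap.ofIsCompl hK K₁.subtype K₂.subtype :=
        (LinearMap.ofIsCompl_eq hK (fun u => by simp [← hs₁]) fun u => by simp [← hs₂]).symm
    _ = LinearMap.id := LinearMap.ofIsCompl_eq hK (fun _ => rfl) fun _ => rfl

theorem of_isAlmostSplitSeq {T E X : ModuleCat.{u} A} {f : T ⟶ E} {g : E ⟶ X}
    (hfg : IsAlmostSplitSeq A f g) (hM : HomZero A M T) : ExtensionsSplit A M X := by
  obtain ⟨hf, -, hfg_exact, hg_not_split, hg_lift⟩ := hfg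
  intro Y _ _ k p hkp hp
  by_contra hp_not_split
  obtain ⟨q, hq⟩ := hg_lift (.of A Y) (ModuleCat.ofHom p) fun ⟨s, hs⟩ =>
    hp_not_split ⟨s.hom, congr(($hs).hom)⟩
  have hgq : ∀ y, g (q y) = p y := fun y => congr(($hq).hom y)
  have hqk_range : ∀ m, q (k m) ∈ LinearMap.range f.hom := fun m => by
    rw [hfg_exact, LinearMap.mem_ker, hgq, hkp.apply_apply_eq_zero]
  -- `q ∘ k` factors through `f`, hence through `Hom(M, T) = 0`.
  have hqk : ∀ m, q (k m) = 0 := by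
    let u : M →ₗ[A] T := (LinearEquiv.ofInjective f.hom hf).symm.toLinearMap ∘ₗ
      (q.hom ∘ₗ k).codRestrict _ hqk_range
    have hu : u = 0 := congr(($(hM (ModuleCat.ofHom u))).hom)
    intro m
    have hfu : f (u m) = q (k m) := LinearEquiv.ofInjective_symm_apply (h := hf) _ _
    rw [← hfu, hu, LinearMap.zero_apply, map_zero]
  have hker : LinearMap.ker p ≤ LinearMap.ker q.hom := by
    rw [hkp.linearMap_ker_eq]
    rintro _ ⟨m, rfl⟩
    exact hqk m
  let q' : X →ₗ[A] E :=
    (LinearMap.ker p).liftQ q.hom hker ∘ₗ (p.quotKerEquivOfSurjective hp).symm.toLinearMap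
  have hq' : ∀ y, q' (p y) = q y := fun y => by
    simp [q']
  refine hg_not_split ⟨ModuleCat.ofHom q', ModuleCat.hom_ext (LinearMap.ext fun x => ?_)⟩
  obtain ⟨y, rfl⟩ := hp x
  simp [hq', hgq]

end ExtensionsSplit

theorem exists_isCompl_of_not_indec {V : Type u} [AddCommGroup V] [Module A V] [Nontrivial V]
    (hV : ¬ Indec A (ModuleCat.of A V)) :
    ∃ K₁ K₂ : Submodule A V, IsCompl K₁ K₂ ∧ K₁ ≠ ⊤ ∧ K₂ ≠ ⊤ := by
  obtain ⟨e, he, he0, he1⟩ : ∃ e : ModuleCat.of A V ⟶ .of A V, e ≫ e = e ∧ e ≠ 0 ∧ e ≠ 𝟙 _ := by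
    simpa [Indec, not_or, and_assoc, ‹Nontrivial V›] using hV
  have hidem : IsIdempotentElem e.hom := congr(($he).hom)
  refine ⟨LinearMap.range e.hom, LinearMap.ker e.hom, LinearMap.IsIdempotentElem.isCompl hidem,
    fun h => he1 ?_, fun h => he0 ?_⟩
  · ext x
    exact (LinearMap.IsIdempotentElem.mem_range_iff hidem).mp (h ▸ Submodule.mem_top)
  · exact ModuleCat.hom_ext (LinearMap.ker_eq_top.mp h)

theorem homZero_tau_of_not_isMiddleOfShortChain {τ : ModuleCat A → ModuleCat A}
    {M X : ModuleCat A} (hM : ¬ IsMiddleOfShortChain A τ M) (hX : Indec A X) (f : X ⟶ M)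
    (hf : f ≠ 0) : HomZero A M (τ X) := by
  intro g
  by_contra hg
  exact hM ⟨X, hX, ⟨f, hf⟩, ⟨g, hg⟩⟩

theorem range_comp_subtype_lt {V Q : Type*} [AddCommGroup V] [Module A V] [AddCommGroup Q]
    [Module A Q] {ι : V →ₗ[A] Q} (hι : Function.Injective ι) {K : Submodule A V} (hK : K ≠ ⊤) :
    LinearMap.range (ι ∘ₗ K.subtype) < LinearMap.range ι := by
  rw [LinearMap.range_comp, Submodule.range_subtype, LinearMap.range_eq_map]
  exact Submodule.map_strictMono_of_injective hι (lt_top_iff_ne_top.mpr hK)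

theorem extensionsSplit_of_injective {τ : ModuleCat.{u} A → ModuleCat.{u} A}
    (hτ : IsARTranslation A τ) {M : ModuleCat.{u} A} (hM : ¬ IsMiddleOfShortChain A τ M)
    {Q : Type u} [AddCommGroup Q] [Module A Q] [IsArtinian A Q]
    (hQ : ∀ q : Q, q ≠ 0 → ∃ f : Q →ₗ[A] M, f q ≠ 0)
    {V : Type u} [AddCommGroup V] [Module A V] (ι : V →ₗ[A] Q) (hι : Function.Injective ι) :
    ExtensionsSplit A M V := by
  generalize hW : LinearMap.range ι = W
  induction W using WellFoundedLT.induction generalizing V with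
  | _ W ih =>
  subst hW
  rcases subsingleton_or_nontrivial V with hV | hV
  · exact .of_subsingleton
  by_cases hind : Indec A (.of A V)
  · by_cases hproj : Projective (ModuleCat.of A V)
    · have := (IsProjective.iff_projective V).mpr hproj
      exact .of_projective
    obtain ⟨E, f, g, hfg⟩ := hτ _ hind hproj
    obtain ⟨v, hv⟩ := exists_ne (0 : V)
    obtain ⟨c, hc⟩ := hQ (ι v) ((map_ne_zero_iff ι hι).mpr hv)
    refine .of_isAlmostSplitSeq hfg (homZero_tau_of_not_isMiddleOfShortChain hM hind
      (ModuleCat.ofHom (c ∘ₗ ι)) fun h => hc ?_)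
    simpa using congr(($h).hom v)
  obtain ⟨K₁, K₂, hK, hK₁, hK₂⟩ := exists_isCompl_of_not_indec hind
  exact .of_isCompl hK (ih _ (range_comp_subtype_lt hι hK₁) _ (hι.comp K₁.injective_subtype) rfl)
    (ih _ (range_comp_subtype_lt hι hK₂) _ (hι.comp K₂.injective_subtype) rfl)

theorem Sincere.exists_injective {M : ModuleCat A} (hM : Sincere A M) (S : Type)
    [AddCommGroup S] [Module A S] (hS : IsSimpleModule A S) :
    ∃ (P : Submodule A M) (j : S →ₗ[A] M ⧸ P), Function.Injective j := by
  obtain ⟨N, P, -, ⟨e⟩⟩ := hM S hS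
  have hker : P.comap N.subtype = LinearMap.ker (P.mkQ ∘ₗ N.subtype) := by
    rw [LinearMap.ker_comp, Submodule.ker_mkQ]
  exact ⟨P, (P.comap N.subtype).liftQ _ hker.le ∘ₗ e.symm.toLinearMap,
    (LinearMap.ker_eq_bot.mp (Submodule.ker_liftQ_eq_bot' _ _ hker)).comp e.symm.injective⟩

theorem Sincere.ker_eq_bot_of_extensionsSplit [IsNoetherianRing A] {M : ModuleCat.{u} A}
    (hM : Sincere A M) {Q : Type u} [AddCommGroup Q] [Module A Q] (π : A →ₗ[A] Q)
    (hπ : Function.Surjective π) (hπM : LinearMap.ker π ≤ Module.annihilator A M)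
    (hQ : ExtensionsSplit A M Q) : LinearMap.ker π = ⊥ := by
  by_contra hne
  have := Submodule.nontrivial_iff_ne_bot.mpr hne
  obtain ⟨I', hI', -⟩ :=
    (eq_top_or_exists_le_coatom (⊥ : Submodule A (LinearMap.ker π))).resolve_left bot_ne_top
  obtain ⟨P, j, hj⟩ := hM.exists_injective _ (isSimpleModule_iff_isCoatom.mpr hI')
  let φ := j ∘ₗ I'.mkQ
  obtain ⟨ψ, hψ⟩ := LinearMap.exists_extension_of_pushoutProj_split π φ hπ <|
    hQ _ (LinearMap.pushoutInl π φ ∘ₗ P.mkQ) _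
      ((P.mkQ_surjective.comp_exact_iff_exact).mpr (LinearMap.exact_pushoutInl_pushoutProj π φ))
      (LinearMap.pushoutProj_surjective π φ hπ)
  have hφ : ∀ i, φ i = 0 := by
    intro i
    obtain ⟨m, hm⟩ := P.mkQ_surjective (ψ 1)
    calc φ i = ψ ((i : A) • 1) := by simp [← hψ]
      _ = (i : A) • P.mkQ m := by rw [map_smul, hm]
      _ = 0 := by rw [← map_smul, Module.mem_annihilator.mp (hπM i.2) m, map_zero]
  obtain ⟨i, hi⟩ := SetLike.exists_not_mem_of_ne_top I' hI'.1
  exact hi ((Submodule.Quotient.mk_eq_zero I').mp (hj (by simpa [φ] using hφ i)))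

end

theorem sincere_not_middle_of_short_chain_faithful
    (R : Type) [CommRing R] [IsArtinianRing R] [Algebra R A] [Module.Finite R A]
    (τ : ModuleCat A → ModuleCat A) (hτ : IsARTranslation A τ)
    (M : ModuleCat A) (hsinc : Sincere A M)
    (hmid : ¬ IsMiddleOfShortChain A τ M) :
    ∀ a : A, (∀ m : M, a • m = 0) → a = 0 := by
  have : IsArtinianRing A := .of_finite R A
  -- `A ⧸ Ann M` realised as a submodule of `M^M`, which lives in the universe of `M`.
  let ev : A →ₗ[A] (M → M) := LinearMap.pi (LinearMap.toSpanSingleton A M)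
  have hker : LinearMap.ker ev.rangeRestrict = Module.annihilator A M := by
    ext a
    simp [ev, funext_iff, Module.mem_annihilator]
  have : IsArtinian A (LinearMap.range ev) :=
    isArtinian_of_surjective A ev.rangeRestrict ev.surjective_rangeRestrict
  have hcogen : ∀ q : LinearMap.range ev, q ≠ 0 → ∃ f : LinearMap.range ev →ₗ[A] M, f q ≠ 0 := by
    intro q hq
    obtain ⟨m, hm⟩ := Function.ne_iff.mp (Subtype.coe_ne_coe.mpr hq)
    exact ⟨LinearMap.proj m ∘ₗ (LinearMap.range ev).subtype, hm⟩
  have hbot := hsinc.ker_eq_bot_of_extensionsSplit ev.rangeRestrict ev.surjective_rangeRestrict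
    hker.le (extensionsSplit_of_injective hτ hmid hcogen LinearMap.id Function.injective_id)
  intro a ha
  rw [hker] at hbot
  exact (Submodule.mem_bot A).mp (hbot ▸ Module.mem_annihilator.mpr ha)
end

section
/- Let A be an artin algebra with a decomposition Γ_A = P(A) ∨ T₀ ∨ (⋁_{q ∈ ℚ⁺} T_q) ∨ T_∞ ∨ Q(A) as for a tubular algebra, with Hom_A(Q(A), T_∞) = 0. Then A admits no faithful finitely generated module M all of whose indecomposable direct summands lie in Q(A), provided T_∞ contains an indecomposable injective module I. -/
open CategoryTheory

variable (A : Type) [Ring A]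

/-!
Over an artinian ring a faithful module `M` admits an embedding `A ↪ Mˢ` for some finite `s`.
Extending a nonzero map `A → I` along it, injectivity of `I` yields a nonzero map `Mˢ → I`,
hence a nonzero map from some indecomposable summand of `M` into `I`. This is impossible
when those summands lie in `Q(A)` and `I ∈ T_∞`, since `Hom(Q(A), T_∞) = 0`.
-/

theorem LinearMap.eq_zero_of_forall_comp_single {R ι N : Type*} [Ring R] [Finite ι]
    [DecidableEq ι] {D : ι → Type*} [∀ i, AddCommGroup (D i)] [∀ i, Module R (D i)]
    [AddCommGroup N] [Module R N] (h : ∀ i (g : D i →ₗ[R] N), g = 0)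
    (f : (∀ i, D i) →ₗ[R] N) : f = 0 :=
  LinearMap.pi_ext' fun i => by rw [h i (f.comp _), LinearMap.zero_comp]

theorem exists_finset_injective_pi_toSpanSingleton {R M : Type*} [Ring R] [IsArtinianRing R]
    [AddCommGroup M] [Module R M] (hM : ∀ a : R, (∀ m : M, a • m = 0) → a = 0) :
    ∃ s : Finset M,
      Function.Injective (LinearMap.pi fun m : s => LinearMap.toSpanSingleton R M m) := by
  obtain ⟨s, hs⟩ :=
    Finset.exists_inf_le fun m : M => LinearMap.ker (LinearMap.toSpanSingleton R M m)
  refine ⟨s, LinearMap.ker_eq_bot.mp <| le_bot_iff.mp fun a ha => hM a fun m => hs m ?_⟩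
  exact Submodule.mem_finsetInf.mpr fun m hm => congrFun (LinearMap.mem_ker.mp ha) ⟨m, hm⟩

theorem subsingleton_of_injective_of_faithful_hom_eq_zero {R : Type} [Ring R] [IsArtinianRing R]
    {M : Type} [AddCommGroup M] [Module R M] (hM : ∀ a : R, (∀ m : M, a • m = 0) → a = 0)
    (I : ModuleCat.{0} R) [Injective I] (hMI : ∀ f : M →ₗ[R] I, f = 0) : Subsingleton I := by
  classical
  obtain ⟨s, hs⟩ := exists_finset_injective_pi_toSpanSingleton hM
  let ι : ModuleCat.of R R ⟶ ModuleCat.of R (s → M) :=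
    ModuleCat.ofHom (LinearMap.pi fun m : s => LinearMap.toSpanSingleton R M m)
  have : Mono ι := (ModuleCat.mono_iff_injective ι).mpr hs
  refine ⟨fun x y => ?_⟩
  suffices ∀ x : I, x = 0 by rw [this x, this y]
  intro x
  let g : ModuleCat.of R R ⟶ I := ModuleCat.ofHom (LinearMap.toSpanSingleton R I x)
  have hext : (Injective.factorThru g ι).hom = 0 :=
    LinearMap.eq_zero_of_forall_comp_single (fun _ => hMI) _
  calc x = g (1 : R) := by simp [g]
    _ = (Injective.factorThru g ι).hom (ι (1 : R)) := by
      rw [← ModuleCat.comp_apply, Injective.comp_factorThru]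
    _ = 0 := by rw [hext, LinearMap.zero_apply]

theorem tubular_type_no_faithful_module_in_preinjective_part
    (R : Type) [CommRing R] [IsArtinianRing R] [Algebra R A] [Module.Finite R A]
    (Tinf QA : Set (ModuleCat.{0} A))
    (hQinf : ∀ U ∈ QA, ∀ V ∈ Tinf, HomZero A U V)
    (hI : ∃ I ∈ Tinf, Indec A I ∧ Injective I) :
    ¬ ∃ (M : ModuleCat.{0} A), Module.Finite A M ∧
        (∀ a : A, (∀ m : M, a • m = 0) → a = 0) ∧
        (∀ N : ModuleCat.{0} A, Indec A N → Summand A N M → N ∈ QA) ∧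
        ∃ (n : ℕ) (D : Fin n → ModuleCat.{0} A), Nonempty (M ≃ₗ[A] (∀ i, D i)) ∧
          ∀ i, Indec A (D i) ∧ D i ∈ QA := by
  rintro ⟨M, -, hfaith, -, n, D, ⟨e⟩, hD⟩
  obtain ⟨I, hITinf, ⟨hInontriv, -⟩, hIinj⟩ := hI
  have : IsArtinianRing A := isArtinian_of_tower R inferInstance
  have hDI : ∀ i (g : D i →ₗ[A] I), g = 0 := fun i g =>
    congrArg ModuleCat.Hom.hom (hQinf (D i) (hD i).2 I hITinf (ModuleCat.ofHom g))
  have hMI : ∀ f : M →ₗ[A] I, f = 0 := fun f => by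
    have hf := LinearMap.eq_zero_of_forall_comp_single hDI (f.comp e.symm.toLinearMap)
    ext m
    simpa using LinearMap.congr_fun hf (e m)
  exact not_subsingleton I (subsingleton_of_injective_of_faithful_hom_eq_zero hfaith I hMI)
end
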